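/- arXiv:1208.2898 — 2 statements merged into one kernel-verified Lean document; each statement's English description precedes it below -/
import Mathlib

section
/- Let A be an affine hyperplane arrangement in ℂˡ, let cA be its cone in ℂ^{l+1}, and let (cA)* be the projectivization of cA in ℙˡ(ℂ). Then π₁(M(cA)) is isomorphic to π₁(M((cA)*)) × ℤ. -/
/-!
Dehomogenising by the coordinate `t` gives homeomorphisms `M(cA) ≅ M(A) × ℂ*`, `(t, x) ↦ (x/t, t)`,
and `M((cA)*) ≅ M(A)` (the affine chart `t ≠ 0` of `ℙˡ`). Hence
`π₁(M(cA)) ≅ π₁(M(A)) × π₁(ℂ*) ≅ π₁(M((cA)*)) × ℤ`; the basepoints do not matter because `M(A)` is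
path connected.
-/

/-- The quotient topology on the projectivization `ℙˡ(ℂ)` of `ℂ^{l+1} = ℂ × ℂˡ`,
induced from `ℂ^{l+1} ∖ {0}`. -/
noncomputable instance (l : ℕ) : TopologicalSpace (Projectivization ℂ (ℂ × (Fin l → ℂ))) :=
  TopologicalSpace.coinduced (Projectivization.mk' ℂ) inferInstance

/-- The complement `M(cA)` of the cone of the arrangement, an arrangement in
`ℂ^{l+1} = ℂ × ℂˡ` consisting of `{(t,x) | t = 0}` and the `{(t,x) | φᵢ x = cᵢ · t}`. -/
def coneComplement (l n : ℕ) (φ : Fin n → ((Fin l → ℂ) →ₗ[ℂ] ℂ)) (c : Fin n → ℂ) :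
    Set (ℂ × (Fin l → ℂ)) :=
  {p | p.1 ≠ 0 ∧ ∀ i, φ i p.2 ≠ c i * p.1}

/-- The complement `M((cA)*)` in `ℙˡ(ℂ)` of the projectivization of the cone of the
arrangement. -/
def projConeComplement (l n : ℕ) (φ : Fin n → ((Fin l → ℂ) →ₗ[ℂ] ℂ)) (c : Fin n → ℂ) :
    Set (Projectivization ℂ (ℂ × (Fin l → ℂ))) :=
  {q | q.rep.1 ≠ 0 ∧ ∀ i, φ i q.rep.2 ≠ c i * q.rep.1}

open Complex Topology

noncomputable section

lemma subsingleton_setOf_add_mul_eq_zero {K : Type*} [Field K] {u : K} (hu : u ≠ 0) (w : K) :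
    {z : K | u + z * w = 0}.Subsingleton := by
  intro z (hz : u + z * w = 0) z' (hz' : u + z' * w = 0)
  have hw : w ≠ 0 := by rintro rfl; simp_all
  exact mul_right_cancel₀ hw (by linear_combination hz - hz')

section AffineComplement

variable {ι E : Type*} [AddCommGroup E] [Module ℂ E]

/-- The complement `M(A)` of the affine arrangement `{φ i x = c i}`. -/
def affineComplement (φ : ι → E →ₗ[ℂ] ℂ) (c : ι → ℂ) : Set E :=
  {x | ∀ i, φ i x ≠ c i}

/-- A complex line through two points of `M(A)` meets each hyperplane at most once, and a
countably punctured complex line is path connected. -/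
theorem joinedIn_affineComplement [TopologicalSpace E] [ContinuousAdd E] [ContinuousSMul ℂ E]
    [Countable ι] {φ : ι → E →ₗ[ℂ] ℂ} {c : ι → ℂ} {a b : E}
    (ha : a ∈ affineComplement φ c) (hb : b ∈ affineComplement φ c) :
    JoinedIn (affineComplement φ c) a b := by
  set line : ℂ → E := fun z => a + z • (b - a)
  set bad : Set ℂ := ⋃ i, {z | (φ i a - c i) + z * φ i (b - a) = 0}
  have hbad : bad.Countable :=
    Set.countable_iUnion fun i =>
      (subsingleton_setOf_add_mul_eq_zero (sub_ne_zero.2 (ha i)) _).countable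
  have hline : line '' badᶜ ⊆ affineComplement φ c := by
    rintro _ ⟨z, hz, rfl⟩ i hi
    refine hz (Set.mem_iUnion.2 ⟨i, ?_⟩)
    simp only [line, map_add, map_smul, smul_eq_mul] at hi
    show (φ i a - c i) + z * φ i (b - a) = 0
    linear_combination hi
  have hjoin : JoinedIn badᶜ 0 1 :=
    (hbad.isPathConnected_compl_of_one_lt_rank (by simp [Complex.rank_real_complex])).joinedIn
      0 (by simpa [bad] using fun i => sub_ne_zero.2 (ha i))
      1 (by simpa [bad] using fun i => sub_ne_zero.2 (hb i))
  simpa [line] using (hjoin.map (f := line) (by fun_prop)).mono hline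

end AffineComplement

namespace FundamentalGroup

variable {X Y : Type*} [TopologicalSpace X] [TopologicalSpace Y]

def mulEquivOfHomotopyEquiv (h : ContinuousMap.HomotopyEquiv X Y) (x : X) :
    FundamentalGroup X x ≃* FundamentalGroup Y (h x) :=
  (FundamentalGroupoidFunctor.equivOfHomotopyEquiv h).fullyFaithfulFunctor.mulEquivEnd _

def prodMulEquiv (x : X) (y : Y) :
    FundamentalGroup X x × FundamentalGroup Y y ≃* FundamentalGroup (X × Y) (x, y) where
  toFun p := Path.Homotopic.prod p.1 p.2
  invFun p := (Path.Homotopic.projLeft p, Path.Homotopic.projRight p)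
  left_inv _ := Prod.ext (Path.Homotopic.projLeft_prod ..) (Path.Homotopic.projRight_prod ..)
  right_inv := Path.Homotopic.prod_projLeft_projRight
  map_mul' _ _ := (Path.Homotopic.comp_prod_eq_prod_comp ..).symm

end FundamentalGroup

def AddSubgroup.zmultiplesAddEquivInt {G : Type*} [AddGroup G] {a : G} (ha : ¬IsOfFinAddOrder a) :
    zmultiples a ≃+ ℤ :=
  ((AddMonoidHom.ofInjective (injective_zsmul_iff_not_isOfFinAddOrder.mpr ha)).trans
    (AddEquiv.addSubgroupCongr (range_zmultiplesHom a))).symm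

/-- The covering `exp : ℂ → ℂ ∖ {0}` has simply connected total space and deck group `2πiℤ`. -/
def Complex.fundamentalGroupNeZeroMulEquivInt (z : {z : ℂ // z ≠ 0}) :
    FundamentalGroup {z : ℂ // z ≠ 0} z ≃* Multiplicative ℤ :=
  (isAddQuotientCoveringMap_exp.fundamentalGroupEquiv ⟨log z, Subtype.ext (exp_log z.2)⟩).trans <|
    MulOpposite.opMulEquiv.symm.trans <| AddEquiv.toMultiplicative <|
      AddSubgroup.zmultiplesAddEquivInt (not_isOfFinAddOrder_of_isAddTorsionFree two_pi_I_ne_zero)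

lemma inv_fst_smul_snd_smul {K E : Type*} [Field K] [AddCommGroup E] [Module K E] {a : K}
    (ha : a ≠ 0) (v : K × E) : (a • v).1⁻¹ • (a • v).2 = v.1⁻¹ • v.2 := by
  rw [Prod.smul_fst, Prod.smul_snd, smul_eq_mul, smul_smul, mul_inv_rev, inv_mul_cancel_right₀ ha]

namespace Projectivization

open scoped LinearAlgebra.Projectivization

variable {K E : Type*} [Field K] [AddCommGroup E] [Module K E]

lemma mk_rep_fst_ne_zero_iff {v : K × E} (hv : v ≠ 0) : (mk K v hv).rep.1 ≠ 0 ↔ v.1 ≠ 0 := by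
  obtain ⟨a, ha⟩ := exists_smul_eq_mk_rep K v hv
  simp [← ha, Units.smul_def]

/-- `[t : x] ↦ t⁻¹ • x`, with junk value `0` on the hyperplane at infinity `t = 0`. -/
def affineChart (q : ℙ K (K × E)) : E :=
  q.rep.1⁻¹ • q.rep.2

lemma affineChart_mk {v : K × E} (hv : v ≠ 0) : affineChart (mk K v hv) = v.1⁻¹ • v.2 := by
  obtain ⟨a, ha⟩ := exists_smul_eq_mk_rep K v hv
  rw [affineChart, ← ha, Units.smul_def, inv_fst_smul_snd_smul a.ne_zero]

lemma mk_one_affineChart {q : ℙ K (K × E)} (hq : q.rep.1 ≠ 0) :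
    mk K (1, affineChart q) (by simp) = q := by
  conv_rhs => rw [← mk_rep q]
  exact (mk_eq_mk_iff' K _ _ _ _).2 ⟨q.rep.1⁻¹, by ext <;> simp [affineChart, hq]⟩

lemma isQuotientMap_mk' (l : ℕ) : IsQuotientMap (mk' ℂ : {v : ℂ × (Fin l → ℂ) // v ≠ 0} → _) :=
  ⟨⟨rfl⟩, fun q => ⟨⟨q.rep, q.rep_nonzero⟩, mk_rep q⟩⟩

lemma continuousOn_affineChart (l : ℕ) :
    ContinuousOn (affineChart : ℙ ℂ (ℂ × (Fin l → ℂ)) → _) {q | q.rep.1 ≠ 0} := by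
  have hpre : mk' ℂ ⁻¹' {q : ℙ ℂ (ℂ × (Fin l → ℂ)) | q.rep.1 ≠ 0} = {v | v.1.1 ≠ 0} := by
    ext v
    exact mk_rep_fst_ne_zero_iff v.2
  have hopen : IsOpen {v : {v : ℂ × (Fin l → ℂ) // v ≠ 0} | v.1.1 ≠ 0} :=
    isOpen_ne_fun (by fun_prop) continuous_const
  rw [(isQuotientMap_mk' l).continuousOn_isOpen_iff (by rw [isOpen_coinduced, hpre]; exact hopen),
    hpre]
  have hcomp : affineChart ∘ mk' ℂ = fun v : {v : ℂ × (Fin l → ℂ) // v ≠ 0} => v.1.1⁻¹ • v.1.2 :=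
    funext fun v => affineChart_mk v.2
  rw [hcomp]
  exact ContinuousOn.smul (ContinuousOn.inv₀ (by fun_prop) fun v hv => hv) (by fun_prop)

lemma continuous_mk_one (l : ℕ) :
    Continuous fun x : Fin l → ℂ => mk ℂ ((1 : ℂ), x) (by simp) :=
  (isQuotientMap_mk' l).continuous.comp (by fun_prop)

end Projectivization

section ConeComplement

open Projectivization

variable {l n : ℕ} {φ : Fin n → ((Fin l → ℂ) →ₗ[ℂ] ℂ)} {c : Fin n → ℂ}

lemma mem_coneComplement_iff {v : ℂ × (Fin l → ℂ)} :
    v ∈ coneComplement l n φ c ↔ v.1 ≠ 0 ∧ v.1⁻¹ • v.2 ∈ affineComplement φ c := by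
  refine and_congr_right fun hv => forall_congr' fun i => ?_
  rw [map_smul, smul_eq_mul, ne_eq, ne_eq, inv_mul_eq_iff_eq_mul₀ hv, mul_comm]

lemma mem_projConeComplement_iff {q : Projectivization ℂ (ℂ × (Fin l → ℂ))} :
    q ∈ projConeComplement l n φ c ↔ q.rep.1 ≠ 0 ∧ affineChart q ∈ affineComplement φ c :=
  mem_coneComplement_iff

variable (φ c)

def coneComplementHomeomorph :
    coneComplement l n φ c ≃ₜ affineComplement φ c × {z : ℂ // z ≠ 0} where
  toFun v := (⟨v.1.1⁻¹ • v.1.2, (mem_coneComplement_iff.1 v.2).2⟩, ⟨v.1.1, v.2.1⟩)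
  invFun p := ⟨(p.2.1, p.2.1 • p.1.1),
    mem_coneComplement_iff.2 ⟨p.2.2, by rw [inv_smul_smul₀ p.2.2]; exact p.1.2⟩⟩
  left_inv v := Subtype.ext <| Prod.ext rfl (smul_inv_smul₀ v.2.1 _)
  right_inv p := Prod.ext (Subtype.ext (inv_smul_smul₀ p.2.2 _)) rfl
  continuous_toFun := by
    have hfst : Continuous fun v : coneComplement l n φ c => v.1.1 := by fun_prop
    exact .prodMk (.subtype_mk ((hfst.inv₀ fun v => v.2.1).smul (by fun_prop)) _)
      (.subtype_mk hfst _)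
  continuous_invFun := by fun_prop

def projConeComplementHomeomorph : projConeComplement l n φ c ≃ₜ affineComplement φ c where
  toFun q := ⟨affineChart q.1, (mem_projConeComplement_iff.1 q.2).2⟩
  invFun x := ⟨mk ℂ (1, x.1) (by simp), mem_projConeComplement_iff.2
    ⟨(mk_rep_fst_ne_zero_iff _).2 one_ne_zero, by simp [affineChart_mk]⟩⟩
  left_inv q := Subtype.ext (mk_one_affineChart (mem_projConeComplement_iff.1 q.2).1)
  right_inv x := Subtype.ext (by simp [affineChart_mk])
  continuous_toFun := by
    refine .subtype_mk ?_ _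
    exact (continuousOn_affineChart l).comp_continuous continuous_subtype_val
      fun q => (mem_projConeComplement_iff.1 q.2).1
  continuous_invFun := .subtype_mk ((continuous_mk_one l).comp continuous_subtype_val) _

end ConeComplement

end

theorem fundamental_group_cone_vs_projectivization_general
    (l n : ℕ) (φ : Fin n → ((Fin l → ℂ) →ₗ[ℂ] ℂ)) (c : Fin n → ℂ)
    (x : ↥(coneComplement l n φ c)) (y : ↥(projConeComplement l n φ c)) :
    Nonempty (FundamentalGroup ↥(coneComplement l n φ c) x ≃*
      FundamentalGroup ↥(projConeComplement l n φ c) y × Multiplicative ℤ) := by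
  set e := coneComplementHomeomorph φ c
  set e' := projConeComplementHomeomorph φ c
  have γ : Path (e x).1 (e' y) :=
    (joinedIn_affineComplement (e x).1.2 (e' y).2).joined_subtype.somePath
  exact ⟨(FundamentalGroup.mulEquivOfHomotopyEquiv e.toHomotopyEquiv x).trans <|
    (FundamentalGroup.prodMulEquiv _ _).symm.trans <|
      .prodCongr ((FundamentalGroup.fundamentalGroupMulEquivOfPath γ).trans
          (FundamentalGroup.mulEquivOfHomotopyEquiv e'.toHomotopyEquiv y).symm)
        (fundamentalGroupNeZeroMulEquivInt _)⟩

theorem fundamental_group_cone_vs_projectivization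
    (l n : ℕ) (φ : Fin n → ((Fin l → ℂ) →ₗ[ℂ] ℂ)) (c : Fin n → ℂ)
    (hφ : ∀ i, φ i ≠ 0)
    (hdist : Function.Injective fun i => ({x | φ i x = c i} : Set (Fin l → ℂ)))
    (x : ↥(coneComplement l n φ c)) (y : ↥(projConeComplement l n φ c)) :
    Nonempty (FundamentalGroup ↥(coneComplement l n φ c) x ≃*
      FundamentalGroup ↥(projConeComplement l n φ c) y × Multiplicative ℤ) :=
  fundamental_group_cone_vs_projectivization_general l n φ c x y
end

section
/- Let A* be a projective line arrangement in ℙ²(ℂ). Suppose that every graph of Fan type in 𝓕(A*) is connected and that every line of A* contains a point of multiplicity at least three. If there is a graph F ∈ 𝓕(A*) having an edge that is not contained in any simple circuit of F, then A* has a decone with a general position partition. -/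
open scoped Classical

/-- The complex projective plane `ℙ²(ℂ)`, the projectivization of `ℂ³`. -/
abbrev P2 : Type := Projectivization ℂ (Fin 3 → ℂ)

/-- A projective line in `ℙ²(ℂ)`: the image of a 2-dimensional linear subspace of `ℂ³`. -/
def IsProjLine (L : Set P2) : Prop :=
  ∃ W : Submodule ℂ (Fin 3 → ℂ), Module.finrank ℂ W = 2 ∧ L = {p : P2 | p.rep ∈ W}

/-- The multiplicity of a point in an arrangement: the number of lines passing through it. -/
noncomputable def mult (A : Finset (Set P2)) (p : P2) : ℕ :=
  (A.filter (fun L => p ∈ L)).card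

/-- `M₃(A)`: the set of points lying on at least three lines of `A`. -/
def M3 (A : Finset (Set P2)) : Set P2 := {p | 3 ≤ mult A p}

/-- `A` has a decone with a general position partition. -/
def HasDeconeGPP (A : Finset (Set P2)) : Prop :=
  ∃ L ∈ A, ∃ C₁ C₂ : Finset (Set P2),
    C₁.Nonempty ∧ C₂.Nonempty ∧ Disjoint C₁ C₂ ∧ C₁ ∪ C₂ = A.erase L ∧
    ∀ H₁ ∈ C₁, ∀ H₂ ∈ C₂, ∀ p ∈ H₁ ∩ H₂, ∀ K ∈ A, p ∈ K → K = H₁ ∨ K = H₂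

/-- `F` is a graph of Fan type for the arrangement `A`: its vertices are the points of
`M₃(A)`, every edge joins two points on a common line of `A`, and for each line `L` the
edges joining points of `M₃(A) ∩ L` are exactly the consecutive pairs of some enumeration
of `M₃(A) ∩ L`. -/
def IsFanGraph (A : Finset (Set P2)) (F : SimpleGraph ↥(M3 A)) : Prop :=
  (∀ v w : ↥(M3 A), F.Adj v w → ∃ L ∈ A, (v : P2) ∈ L ∧ (w : P2) ∈ L) ∧
  ∀ L ∈ A, (∃ v : ↥(M3 A), (v : P2) ∈ L) →
    ∃ (m : ℕ) (e : Fin m → ↥(M3 A)), Function.Injective e ∧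
      (∀ v : ↥(M3 A), (v : P2) ∈ L ↔ ∃ i, e i = v) ∧
      (∀ v w : ↥(M3 A), (v : P2) ∈ L → (w : P2) ∈ L →
        (F.Adj v w ↔ ∃ i j : Fin m, (j : ℕ) = (i : ℕ) + 1 ∧
          ((e i = v ∧ e j = w) ∨ (e i = w ∧ e j = v))))

/-!
Let `L` be the line through the ends `v`, `w` of the bridge and delete the bridge from `F`.
Every other line `H` of the arrangement keeps its whole path of fan edges, since two points
of `H` spanning the deleted edge would force `H = L`. Put into `C₁` the lines `H ≠ L` whose
triple points are all reachable from `v`, and into `C₂` the rest. A line through `v` lies in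
`C₁` and a line through `w` in `C₂`, because `w` is not reachable from `v`. If some
`H₁ ∈ C₁`, `H₂ ∈ C₂` met in a point on a third line, that point would be a vertex of the graph
reachable from `v`, and then so would all the triple points of `H₂`.
-/

theorem IsProjLine.eq_of_mem_of_mem {L H : Set P2} (hL : IsProjLine L) (hH : IsProjLine H)
    {v w : P2} (hvw : v ≠ w) (hvL : v ∈ L) (hwL : w ∈ L) (hvH : v ∈ H) (hwH : w ∈ H) :
    L = H := by
  have hind : LinearIndependent ℂ ![v.rep, w.rep] := by
    have := (Projectivization.independent_pair_iff_ne v w).2 hvw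
    rw [Projectivization.independent_iff] at this
    have hrep : Projectivization.rep ∘ ![v, w] = ![v.rep, w.rep] := by
      ext i
      fin_cases i <;> rfl
    rwa [hrep] at this
  have hspan : ∀ W : Submodule ℂ (Fin 3 → ℂ), Module.finrank ℂ W = 2 → v.rep ∈ W →
      w.rep ∈ W → Submodule.span ℂ (Set.range ![v.rep, w.rep]) = W := by
    intro W hW hv hw
    refine Submodule.eq_of_le_of_finrank_le ?_ ?_
    · rw [Submodule.span_le, Set.range_subset_iff]
      intro i
      fin_cases i <;> assumption
    · rw [hW, finrank_span_eq_card hind, Fintype.card_fin]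
  obtain ⟨W, hW, rfl⟩ := hL
  obtain ⟨U, hU, rfl⟩ := hH
  rw [← hspan W hW hvL hwL, ← hspan U hU hvH hwH]

theorem SimpleGraph.reachable_of_adj_succ {V : Type*} {G : SimpleGraph V} {m : ℕ}
    (e : Fin m → V) (he : ∀ i j : Fin m, (j : ℕ) = i + 1 → G.Adj (e i) (e j)) (i j : Fin m) :
    G.Reachable (e i) (e j) := by
  obtain ⟨k, rfl⟩ : ∃ k, m = k + 1 := Nat.exists_eq_add_one_of_ne_zero i.pos.ne'
  have hfrom0 : ∀ j, G.Reachable (e 0) (e j) :=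
    Fin.induction .rfl fun j ih => ih.trans (he _ _ (Fin.val_succ j)).reachable
  exact (hfrom0 i).symm.trans (hfrom0 j)

theorem IsFanGraph.reachable_of_mem_line {A : Finset (Set P2)} {F G : SimpleGraph ↥(M3 A)}
    (hF : IsFanGraph A F) {H : Set P2} (hH : H ∈ A)
    (hFG : ∀ p q : ↥(M3 A), (p : P2) ∈ H → (q : P2) ∈ H → F.Adj p q → G.Adj p q)
    {p q : ↥(M3 A)} (hp : (p : P2) ∈ H) (hq : (q : P2) ∈ H) : G.Reachable p q := by
  obtain ⟨m, e, -, hmem, hadj⟩ := hF.2 H hH ⟨p, hp⟩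
  have he : ∀ i j : Fin m, (j : ℕ) = i + 1 → G.Adj (e i) (e j) := fun i j hij =>
    have hi := (hmem (e i)).2 ⟨i, rfl⟩
    have hj := (hmem (e j)).2 ⟨j, rfl⟩
    hFG _ _ hi hj ((hadj _ _ hi hj).2 ⟨i, j, hij, .inl ⟨rfl, rfl⟩⟩)
  obtain ⟨i, rfl⟩ := (hmem p).1 hp
  obtain ⟨j, rfl⟩ := (hmem q).1 hq
  exact SimpleGraph.reachable_of_adj_succ e he i j

theorem exists_ne_mem_of_mem_M3 {A : Finset (Set P2)} {p : P2} (hp : p ∈ M3 A) (L : Set P2) :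
    ∃ H ∈ A, H ≠ L ∧ p ∈ H := by
  have hp : 3 ≤ (A.filter (p ∈ ·)).card := hp
  obtain ⟨H, hH, hHL⟩ := Finset.exists_mem_ne (show 1 < (A.filter (p ∈ ·)).card by omega) L
  exact ⟨H, (Finset.mem_filter.1 hH).1, hHL, (Finset.mem_filter.1 hH).2⟩

theorem mem_M3_of_three_lines {A : Finset (Set P2)} {p : P2} {H₁ H₂ H₃ : Set P2}
    (h₁ : H₁ ∈ A) (h₂ : H₂ ∈ A) (h₃ : H₃ ∈ A) (h₁₂ : H₁ ≠ H₂) (h₁₃ : H₁ ≠ H₃) (h₂₃ : H₂ ≠ H₃)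
    (hp₁ : p ∈ H₁) (hp₂ : p ∈ H₂) (hp₃ : p ∈ H₃) : p ∈ M3 A :=
  Finset.two_lt_card.2 ⟨H₁, Finset.mem_filter.2 ⟨h₁, hp₁⟩, H₂, Finset.mem_filter.2 ⟨h₂, hp₂⟩,
    H₃, Finset.mem_filter.2 ⟨h₃, hp₃⟩, h₁₂, h₁₃, h₂₃⟩

theorem hasDeconeGPP_of_not_reachable {A : Finset (Set P2)} {L : Set P2} (hL : L ∈ A)
    (G : SimpleGraph ↥(M3 A))
    (hG : ∀ H ∈ A, H ≠ L → ∀ p q : ↥(M3 A), (p : P2) ∈ H → (q : P2) ∈ H → G.Reachable p q)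
    {v w : ↥(M3 A)} (hvw : ¬ G.Reachable v w) : HasDeconeGPP A := by
  set C : Set P2 → Prop := fun H => ∀ p : ↥(M3 A), (p : P2) ∈ H → G.Reachable v p
  refine ⟨L, hL, (A.erase L).filter C, (A.erase L).filter (¬ C ·), ?_, ?_,
    Finset.disjoint_filter_filter_not _ _ _, Finset.filter_union_filter_not_eq _ _, ?_⟩
  · obtain ⟨H, hH, hHL, hvH⟩ := exists_ne_mem_of_mem_M3 v.2 L
    exact ⟨H, Finset.mem_filter.2 ⟨Finset.mem_erase.2 ⟨hHL, hH⟩,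
      fun p hp => hG H hH hHL v p hvH hp⟩⟩
  · obtain ⟨H, hH, hHL, hwH⟩ := exists_ne_mem_of_mem_M3 w.2 L
    exact ⟨H, Finset.mem_filter.2 ⟨Finset.mem_erase.2 ⟨hHL, hH⟩, fun hC => hvw (hC w hwH)⟩⟩
  · intro H₁ h₁ H₂ h₂ p ⟨hp₁, hp₂⟩ K hK hpK
    obtain ⟨h₁L, hC₁⟩ := Finset.mem_filter.1 h₁
    obtain ⟨h₂L, hC₂⟩ := Finset.mem_filter.1 h₂
    have h₁₂ : H₁ ≠ H₂ := fun h => hC₂ (h ▸ hC₁)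
    by_contra! hKne
    have hpM : p ∈ M3 A := mem_M3_of_three_lines (Finset.mem_of_mem_erase h₁L)
      (Finset.mem_of_mem_erase h₂L) hK h₁₂ hKne.1.symm hKne.2.symm hp₁ hp₂ hpK
    exact hC₂ fun q hq => (hC₁ ⟨p, hpM⟩ hp₁).trans
      (hG H₂ (Finset.mem_of_mem_erase h₂L) (Finset.ne_of_mem_erase h₂L) ⟨p, hpM⟩ q hp₂ hq)

theorem bridge_edge_gives_gpp_general
    (A : Finset (Set P2)) (hA : ∀ L ∈ A, IsProjLine L)
    (F : SimpleGraph ↥(M3 A)) (hF : IsFanGraph A F)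
    (v w : ↥(M3 A)) (hadj : F.Adj v w)
    (hnocirc : ¬ ∃ (u : ↥(M3 A)) (cW : F.Walk u u), cW.IsCycle ∧ s(v, w) ∈ cW.edges) :
    HasDeconeGPP A := by
  obtain ⟨L, hL, hvL, hwL⟩ := hF.1 v w hadj
  have hvw : (v : P2) ≠ w := fun h => hadj.ne (Subtype.ext h)
  have hbridge : ¬ (F.deleteEdges {s(v, w)}).Reachable v w := fun h =>
    hnocirc (SimpleGraph.adj_and_reachable_delete_edges_iff_exists_cycle.1 ⟨hadj, h⟩)
  refine hasDeconeGPP_of_not_reachable hL _ (fun H hH hHL p q hp hq => ?_) hbridge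
  refine hF.reachable_of_mem_line hH (fun a b ha hb hab =>
    SimpleGraph.deleteEdges_adj.2 ⟨hab, fun hs => hHL ?_⟩) hp hq
  rcases Sym2.eq_iff.1 (Set.mem_singleton_iff.1 hs) with ⟨rfl, rfl⟩ | ⟨rfl, rfl⟩
  · exact (hA H hH).eq_of_mem_of_mem (hA L hL) hvw ha hb hvL hwL
  · exact (hA H hH).eq_of_mem_of_mem (hA L hL) hvw hb ha hvL hwL

theorem bridge_edge_gives_gpp
    (A : Finset (Set P2)) (hA : ∀ L ∈ A, IsProjLine L)
    (hconn : ∀ F : SimpleGraph ↥(M3 A), IsFanGraph A F → F.Connected)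
    (hmult : ∀ L ∈ A, ∃ p ∈ M3 A, p ∈ L)
    (F : SimpleGraph ↥(M3 A)) (hF : IsFanGraph A F)
    (v w : ↥(M3 A)) (hadj : F.Adj v w)
    (hnocirc : ¬ ∃ (u : ↥(M3 A)) (cW : F.Walk u u), cW.IsCycle ∧ s(v, w) ∈ cW.edges) :
    HasDeconeGPP A :=
  bridge_edge_gives_gpp_general A hA F hF v w hadj hnocirc
end
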